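/- arXiv:2301.12928 — 11 statements merged into one kernel-verified Lean document; each statement's English description precedes it below -/
import Mathlib

section
/- If (A,⋆) is an anti-associative algebra (i.e. (x⋆y)⋆z + x⋆(y⋆z) = 0 for all x,y,z), then the symmetrized product x•y := x⋆y + y⋆x makes A a mock-Lie algebra. -/
/-- The symmetrization `x•y := x⋆y + y⋆x` of an anti-associative product `⋆`
is a mock-Lie product (commutative and satisfies the Jacobi identity). -/
theorem stmt2 {K A : Type*} [Field K] [CharZero K] [AddCommGroup A] [Module K A]
    (s : A →ₗ[K] A →ₗ[K] A)
    (hanti : ∀ x y z : A, s (s x y) z + s x (s y z) = 0)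
    (mul : A → A → A) (hmul : ∀ x y : A, mul x y = s x y + s y x) :
    (∀ x y : A, mul x y = mul y x) ∧
    (∀ x y z : A, mul x (mul y z) + mul y (mul z x) + mul z (mul x y) = 0) := by
  constructor
  · intro x y; rw [hmul, hmul]; abel
  · intro x y z
    simp only [hmul, map_add, LinearMap.add_apply]
    have h1 := hanti x y z
    have h2 := hanti x z y
    have h3 := hanti y x z
    have h4 := hanti y z x
    have h5 := hanti z x y
    have h6 := hanti z y x
    linear_combination (norm := abel) h1 + h2 + h3 + h4 + h5 + h6
end

section
/- If (A,·) is a mock-pre-Lie algebra, then the product x⋆y := x·y + y·x defines a mock-Lie algebra structure on A (the sub-adjacent mock-Lie algebra). -/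
/-- The symmetrized product of a mock-pre-Lie algebra is a mock-Lie product. -/
theorem stmt7 {K A : Type*} [Field K] [CharZero K] [AddCommGroup A] [Module K A]
    (c : A →ₗ[K] A →ₗ[K] A)
    (hpre : ∀ x y z : A, c (c x y) z + c x (c y z) = -(c (c y x) z + c y (c x z)))
    (star : A → A → A) (hstar : ∀ x y : A, star x y = c x y + c y x) :
    (∀ x y : A, star x y = star y x) ∧
    (∀ x y z : A, star x (star y z) + star y (star z x) + star z (star x y) = 0) := by
  constructor
  · intro x y; rw [hstar, hstar, add_comm]
  · intro x y z
    have h1 : (c (c y z) x + c y (c z x)) + (c (c z y) x + c z (c y x)) = 0 :=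
      add_eq_zero_iff_eq_neg.mpr (hpre y z x)
    have h2 : (c (c z x) y + c z (c x y)) + (c (c x z) y + c x (c z y)) = 0 :=
      add_eq_zero_iff_eq_neg.mpr (hpre z x y)
    have h3 : (c (c x y) z + c x (c y z)) + (c (c y x) z + c y (c x z)) = 0 :=
      add_eq_zero_iff_eq_neg.mpr (hpre x y z)
    simp only [hstar, map_add, LinearMap.add_apply]
    rw [show
      c x (c y z) + c x (c z y) + (c (c y z) x + c (c z y) x) +
        (c y (c z x) + c y (c x z) + (c (c z x) y + c (c x z) y)) +
        (c z (c x y) + c z (c y x) + (c (c x y) z + c (c y x) z)) =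
      ((c (c y z) x + c y (c z x)) + (c (c z y) x + c z (c y x))) +
        (((c (c z x) y + c z (c x y)) + (c (c x z) y + c x (c z y))) +
        (((c (c x y) z + c x (c y z)) + (c (c y x) z + c y (c x z)))))
      from by abel, h1, h2, h3]
    simp
end

section
/- Let (A,•) be a mock-Lie algebra, (V,ρ) a representation, and T: V → A an O-operator (i.e. T(u)•T(v) = T(ρ(Tu)v + ρ(Tv)u) for all u,v ∈ V). Then the product u·v := ρ(Tu)v makes V a mock-pre-Lie algebra. -/
/-- An O-operator on a representation of a mock-Lie algebra induces a mock-pre-Lie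
structure `u·v := ρ(Tu)v` on `V`. -/
theorem stmt8 {K A V : Type*} [Field K] [CharZero K] [AddCommGroup A] [Module K A]
    [AddCommGroup V] [Module K V]
    (m : A →ₗ[K] A →ₗ[K] A) (hcomm : ∀ x y : A, m x y = m y x)
    (hjac : ∀ x y z : A, m x (m y z) + m y (m z x) + m z (m x y) = 0)
    (ρ : A →ₗ[K] Module.End K V)
    (hrep : ∀ x y : A, ρ (m x y) = -(ρ x * ρ y) - ρ y * ρ x)
    (T : V →ₗ[K] A)
    (hT : ∀ u v : V, m (T u) (T v) = T (ρ (T u) v + ρ (T v) u))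
    (c : V → V → V) (hc : ∀ u v : V, c u v = ρ (T u) v) :
    ∀ u v w : V, c (c u v) w + c u (c v w) = -(c (c v u) w + c v (c u w)) := by
  intro u v w
  simp only [hc]
  have key : ρ (T (ρ (T u) v + ρ (T v) u)) w
      = -(ρ (T u) (ρ (T v) w)) - ρ (T v) (ρ (T u) w) := by
    rw [← hT, hrep]
    simp [Module.End.mul_apply]
  simp only [map_add, LinearMap.add_apply] at key
  linear_combination (norm := abel) key
end

section
/- Let (A,•) be a mock-Lie algebra, (V,ρ) a representation, and T: V → A an invertible O-operator. Then the product x·y := T(ρ(x)T⁻¹(y)) is a mock-pre-Lie algebra structure on A which is compatible with •, i.e. x·y + y·x = x•y for all x,y ∈ A. -/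
/-- An invertible O-operator gives a compatible mock-pre-Lie structure on the
mock-Lie algebra `A`. -/
theorem stmt9 {K A V : Type*} [Field K] [CharZero K] [AddCommGroup A] [Module K A]
    [AddCommGroup V] [Module K V]
    (m : A →ₗ[K] A →ₗ[K] A) (hcomm : ∀ x y : A, m x y = m y x)
    (hjac : ∀ x y z : A, m x (m y z) + m y (m z x) + m z (m x y) = 0)
    (ρ : A →ₗ[K] Module.End K V)
    (hrep : ∀ x y : A, ρ (m x y) = -(ρ x * ρ y) - ρ y * ρ x)
    (T : V ≃ₗ[K] A)
    (hT : ∀ u v : V, m (T u) (T v) = T (ρ (T u) v + ρ (T v) u))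
    (c : A → A → A) (hc : ∀ x y : A, c x y = T (ρ x (T.symm y))) :
    (∀ x y z : A, c (c x y) z + c x (c y z) = -(c (c y x) z + c y (c x z))) ∧
    (∀ x y : A, c x y + c y x = m x y) := by
  have hm : ∀ x y : A, m x y = T (ρ x (T.symm y)) + T (ρ y (T.symm x)) := by
    intro x y
    have h := hT (T.symm x) (T.symm y)
    simp only [LinearEquiv.apply_symm_apply] at h
    rw [h, map_add]
  have key : ∀ x y : A,
      ρ (T (ρ x (T.symm y))) + ρ (T (ρ y (T.symm x))) = -(ρ x * ρ y) - ρ y * ρ x := by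
    intro x y
    rw [← map_add, ← hm, hrep]
  constructor
  · intro x y z
    simp only [hc, LinearEquiv.symm_apply_apply]
    have h := LinearMap.congr_fun (key x y) (T.symm z)
    simp only [LinearMap.add_apply, LinearMap.sub_apply, LinearMap.neg_apply,
      Module.End.mul_apply] at h
    rw [← map_add, ← map_add, ← map_neg]
    congr 1
    have : ρ (T (ρ x (T.symm y))) (T.symm z) + ρ x (ρ y (T.symm z))
        + (ρ (T (ρ y (T.symm x))) (T.symm z) + ρ y (ρ x (T.symm z)))
        = (ρ (T (ρ x (T.symm y))) (T.symm z) + ρ (T (ρ y (T.symm x))) (T.symm z))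
        + (ρ x (ρ y (T.symm z)) + ρ y (ρ x (T.symm z))) := by abel
    rw [eq_neg_iff_add_eq_zero, this, h]
    abel
  · intro x y
    rw [hc, hc, hm]
end

section
/- Let (A,•) and (H,⋄) be mock-Lie algebras with linear maps ρ: A → End(H) and μ: H → End(A). Define on A ⊕ H the product (x+a)∘(y+b) = x•y + μ(b)x + μ(a)y + a⋄b + ρ(y)a + ρ(x)b. Then (A ⊕ H, ∘) is a mock-Lie algebra if and only if (H,ρ) and (A,μ) are representations of A and H respectively and the compatibility conditions ρ(x)(a⋄b) + ρ(x)a⋄b + a⋄ρ(x)b + ρ(μ(a)x)b + ρ(μ(b)x)a = 0 and μ(a)(x•y) + μ(a)x•y + x•μ(a)y + μ(ρ(x)a)y + μ(ρ(y)a)x = 0 hold for all x,y ∈ A, a,b ∈ H. -/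
/-- Matched pair theorem: the product on `A ⊕ H` is mock-Lie iff `ρ, μ` are
representations and the two compatibility conditions hold. -/
theorem stmt10 {K A H : Type*} [Field K] [CharZero K] [AddCommGroup A] [Module K A]
    [AddCommGroup H] [Module K H]
    (m : A →ₗ[K] A →ₗ[K] A) (hcA : ∀ x y : A, m x y = m y x)
    (hjA : ∀ x y z : A, m x (m y z) + m y (m z x) + m z (m x y) = 0)
    (d : H →ₗ[K] H →ₗ[K] H) (hcH : ∀ a b : H, d a b = d b a)
    (hjH : ∀ a b e : H, d a (d b e) + d b (d e a) + d e (d a b) = 0)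
    (ρ : A →ₗ[K] Module.End K H) (μ : H →ₗ[K] Module.End K A)
    (P : A × H → A × H → A × H)
    (hP : ∀ p q : A × H,
      P p q = (m p.1 q.1 + μ q.2 p.1 + μ p.2 q.1, d p.2 q.2 + ρ q.1 p.2 + ρ p.1 q.2)) :
    ((∀ p q : A × H, P p q = P q p) ∧
     (∀ p q s : A × H, P p (P q s) + P q (P s p) + P s (P p q) = 0)) ↔
    ((∀ x y : A, ρ (m x y) = -(ρ x * ρ y) - ρ y * ρ x) ∧
     (∀ a b : H, μ (d a b) = -(μ a * μ b) - μ b * μ a) ∧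
     (∀ (x : A) (a b : H),
        ρ x (d a b) + d (ρ x a) b + d a (ρ x b) + ρ (μ a x) b + ρ (μ b x) a = 0) ∧
     (∀ (a : H) (x y : A),
        μ a (m x y) + m (μ a x) y + m x (μ a y) + μ (ρ x a) y + μ (ρ y a) x = 0)) := by
  constructor
  · rintro ⟨-, hjac⟩
    refine ⟨?_, ?_, ?_, ?_⟩
    · intro x y
      ext c
      have hh := hjac (x, 0) (y, 0) (0, c)
      simp only [hP, Prod.mk_add_mk, Prod.mk_eq_zero, map_add, map_zero, LinearMap.add_apply,
        LinearMap.zero_apply, add_zero, zero_add] at hh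
      simp only [LinearMap.sub_apply, LinearMap.neg_apply, Module.End.mul_apply]
      linear_combination (norm := abel) hh.2
    · intro a b
      ext z
      have hh := hjac (0, a) (0, b) (z, 0)
      simp only [hP, Prod.mk_add_mk, Prod.mk_eq_zero, map_add, map_zero, LinearMap.add_apply,
        LinearMap.zero_apply, add_zero, zero_add] at hh
      simp only [LinearMap.sub_apply, LinearMap.neg_apply, Module.End.mul_apply]
      linear_combination (norm := abel) hh.1
    · intro x a b
      have hh := hjac (0, a) (0, b) (x, 0)
      simp only [hP, Prod.mk_add_mk, Prod.mk_eq_zero, map_add, map_zero, LinearMap.add_apply,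
        LinearMap.zero_apply, add_zero, zero_add] at hh
      linear_combination (norm := abel) hh.2 + hcH (ρ x a) b
    · intro a x y
      have hh := hjac (x, 0) (y, 0) (0, a)
      simp only [hP, Prod.mk_add_mk, Prod.mk_eq_zero, map_add, map_zero, LinearMap.add_apply,
        LinearMap.zero_apply, add_zero, zero_add] at hh
      linear_combination (norm := abel) hh.1 + hcA (μ a x) y
  · rintro ⟨hr1, hr2, h3, h4⟩
    have h1 : ∀ (x y : A) (c : H), ρ (m x y) c = -(ρ x (ρ y c)) - ρ y (ρ x c) := by
      intro x y c
      rw [hr1]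
      simp [Module.End.mul_apply]
    have h2 : ∀ (a b : H) (z : A), μ (d a b) z = -(μ a (μ b z)) - μ b (μ a z) := by
      intro a b z
      rw [hr2]
      simp [Module.End.mul_apply]
    constructor
    · intro p q
      rw [hP p q, hP q p]
      simp only [Prod.mk.injEq]
      constructor
      · rw [hcA p.1 q.1]; abel
      · rw [hcH p.2 q.2]; abel
    · rintro ⟨x, a⟩ ⟨y, b⟩ ⟨z, c⟩
      simp only [hP, Prod.mk_add_mk, Prod.mk_eq_zero, map_add, LinearMap.add_apply]
      constructor
      · linear_combination (norm := abel) hjA x y z + h4 a y z + h4 b z x + h4 c x y +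
          h2 b c x + h2 c a y + h2 a b z + hcA x (μ b z) + hcA y (μ c x) + hcA z (μ a y)
      · linear_combination (norm := abel) hjH a b c + h3 x b c + h3 y c a + h3 z a b +
          h1 y z a + h1 z x b + h1 x y c + hcH a (ρ y c) + hcH b (ρ z a) + hcH c (ρ x b)
end

section
/- Let (A,•) be a mock-Lie algebra with a mock-Lie structure ⋄ on the dual A*, with L* and 𝓛* the respective coadjoint representations. Then (A, A*; L*, 𝓛*) is a matched pair of mock-Lie algebras if and only if for all x,y ∈ A and ξ ∈ A*: 𝓛*(ξ)(x•y) + (𝓛*(ξ)x)•y + x•(𝓛*(ξ)y) + 𝓛*(L*(x)ξ)(y) + 𝓛*(L*(y)ξ)(x) = 0. -/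
/-- `(A, A*; L*, 𝓛*)` is a matched pair of mock-Lie algebras iff the single
compatibility condition holds. -/
theorem stmt11 {K A : Type*} [Field K] [CharZero K] [AddCommGroup A] [Module K A]
    [FiniteDimensional K A]
    (m : A →ₗ[K] A →ₗ[K] A) (hcA : ∀ x y : A, m x y = m y x)
    (hjA : ∀ x y z : A, m x (m y z) + m y (m z x) + m z (m x y) = 0)
    (mlt : Module.Dual K A →ₗ[K] Module.Dual K A →ₗ[K] Module.Dual K A)
    (hcD : ∀ ξ η : Module.Dual K A, mlt ξ η = mlt η ξ)
    (hjD : ∀ ξ η ν : Module.Dual K A,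
      mlt ξ (mlt η ν) + mlt η (mlt ν ξ) + mlt ν (mlt ξ η) = 0)
    (LL : Module.Dual K A →ₗ[K] Module.End K A)
    (hLL : ∀ (ξ : Module.Dual K A) (x : A) (η : Module.Dual K A),
      η (LL ξ x) = mlt ξ η x) :
    ((∀ x y : A, (m (m x y)).dualMap =
        -((m x).dualMap ∘ₗ (m y).dualMap) - (m y).dualMap ∘ₗ (m x).dualMap) ∧
     (∀ ξ η : Module.Dual K A, LL (mlt ξ η) = -(LL ξ * LL η) - LL η * LL ξ) ∧
     (∀ (x : A) (ξ η : Module.Dual K A),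
        (m x).dualMap (mlt ξ η) + mlt ((m x).dualMap ξ) η + mlt ξ ((m x).dualMap η)
          + (m (LL ξ x)).dualMap η + (m (LL η x)).dualMap ξ = 0) ∧
     (∀ (ξ : Module.Dual K A) (x y : A),
        LL ξ (m x y) + m (LL ξ x) y + m x (LL ξ y)
          + LL ((m x).dualMap ξ) y + LL ((m y).dualMap ξ) x = 0)) ↔
    (∀ (ξ : Module.Dual K A) (x y : A),
        LL ξ (m x y) + m (LL ξ x) y + m x (LL ξ y)
          + LL ((m x).dualMap ξ) y + LL ((m y).dualMap ξ) x = 0) := by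
  constructor
  · exact fun h => h.2.2.2
  · intro H
    refine ⟨?_, ?_, ?_, H⟩
    · -- first condition: pure consequence of Jacobi + commutativity of m
      intro x y
      ext ξ z
      simp only [LinearMap.dualMap_apply, LinearMap.sub_apply, LinearMap.neg_apply,
        LinearMap.comp_apply, LinearMap.coe_comp, Function.comp_apply]
      have h0 := hjA x y z
      rw [hcA z x] at h0
      have hK : ξ (m x (m y z)) + ξ (m y (m x z)) + ξ (m z (m x y)) = 0 := by
        simpa [map_add] using congrArg ξ h0
      rw [hcA (m x y) z]
      linear_combination hK
    · -- second condition: from Jacobi + commutativity of mlt, dual separation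
      intro ξ η
      apply LinearMap.ext
      intro x
      rw [← sub_eq_zero]
      apply (Module.forall_dual_apply_eq_zero_iff K _).mp
      intro ζ
      have h1 : ζ (LL (mlt ξ η) x) = mlt (mlt ξ η) ζ x := hLL _ _ _
      have h2 : ζ (LL ξ (LL η x)) = mlt η (mlt ξ ζ) x := by
        rw [hLL ξ _ ζ, ← hLL η _ (mlt ξ ζ)]
      have h3 : ζ (LL η (LL ξ x)) = mlt ξ (mlt η ζ) x := by
        rw [hLL η _ ζ, ← hLL ξ _ (mlt η ζ)]
      have hj := hjD ξ η ζ
      have hjx : mlt ξ (mlt η ζ) x + mlt η (mlt ζ ξ) x + mlt ζ (mlt ξ η) x = 0 := by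
        simpa using LinearMap.congr_fun hj x
      rw [hcD ζ ξ] at hjx
      rw [hcD (mlt ξ η) ζ] at h1
      simp only [map_sub, LinearMap.sub_apply, LinearMap.neg_apply, map_neg,
        Module.End.mul_apply, h1]
      rw [h2, h3] at *
      linear_combination hjx
    · -- third condition: dual of the hypothesis H
      intro x ξ η
      apply LinearMap.ext
      intro z
      have hz := H ξ x z
      have hη : η (LL ξ (m x z)) + η (m (LL ξ x) z) + η (m x (LL ξ z))
          + η (LL ((m x).dualMap ξ) z) + η (LL ((m z).dualMap ξ) x) = 0 := by
        simpa [map_add] using congrArg η hz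
      have t1 : mlt ξ η (m x z) = η (LL ξ (m x z)) := (hLL _ _ _).symm
      have t2 : mlt ((m x).dualMap ξ) η z = η (LL ((m x).dualMap ξ) z) := (hLL _ _ _).symm
      have t3 : mlt ξ ((m x).dualMap η) z = η (m x (LL ξ z)) := by
        rw [← hLL ξ z ((m x).dualMap η), LinearMap.dualMap_apply]
      have t4 : (m (LL ξ x)).dualMap η z = η (m (LL ξ x) z) := rfl
      have t5 : (m (LL η x)).dualMap ξ z = η (LL ((m z).dualMap ξ) x) := by
        rw [LinearMap.dualMap_apply, hLL ((m z).dualMap ξ) x η, hcD,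
          ← hLL η x ((m z).dualMap ξ), LinearMap.dualMap_apply, hcA]
      simp only [LinearMap.add_apply, LinearMap.zero_apply, LinearMap.dualMap_apply]
      have t6 : (m (LL η x)).dualMap ξ z = ξ (m (LL η x) z) := rfl
      linear_combination t1 + t2 + t3 + t5 + hη - t6
end

section
/- Let (A,•) be a mock-Lie algebra with a mock-Lie structure ⋄ on A* given by Δ*: A*⊗A* → A* (the dual of a linear map Δ: A → A⊗A). Then (A, A*; L*, 𝓛*) is a matched pair of mock-Lie algebras if and only if Δ satisfies the cocycle condition Δ(x•y) = -(L(x)⊗id + id⊗L(x))Δ(y) - (L(y)⊗id + id⊗L(y))Δ(x) for all x,y ∈ A. -/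
open TensorProduct

section Aux
variable {K A : Type*} [Field K] [AddCommGroup A] [Module K A]

lemma sep_tensor [FiniteDimensional K A] (t : A ⊗[K] A)
    (h : ∀ ξ η : Module.Dual K A, TensorProduct.dualDistrib K A A (ξ ⊗ₜ η) t = 0) :
    t = 0 := by
  rw [← Module.forall_dual_apply_eq_zero_iff K t]
  suffices h2 : ∀ ψ : Module.Dual K A ⊗[K] Module.Dual K A,
      TensorProduct.dualDistrib K A A ψ t = 0 by
    intro φ
    obtain ⟨ψ, rfl⟩ := (TensorProduct.dualDistribEquiv K A A).surjective φ
    exact h2 ψ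
  intro ψ
  induction ψ using TensorProduct.induction_on with
  | zero => simp
  | tmul ξ η => exact h ξ η
  | add a b ha hb => simp [ha, hb]

lemma pair_rT (f : A →ₗ[K] A) (ξ η : Module.Dual K A) (t : A ⊗[K] A) :
    TensorProduct.dualDistrib K A A (ξ ⊗ₜ η) (LinearMap.rTensor A f t)
      = TensorProduct.dualDistrib K A A ((f.dualMap ξ) ⊗ₜ η) t := by
  induction t using TensorProduct.induction_on with
  | zero => simp
  | tmul a b => simp
  | add a b ha hb => simp [ha, hb]

lemma pair_lT (f : A →ₗ[K] A) (ξ η : Module.Dual K A) (t : A ⊗[K] A) :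
    TensorProduct.dualDistrib K A A (ξ ⊗ₜ η) (LinearMap.lTensor A f t)
      = TensorProduct.dualDistrib K A A (ξ ⊗ₜ (f.dualMap η)) t := by
  induction t using TensorProduct.induction_on with
  | zero => simp
  | tmul a b => simp
  | add a b ha hb => simp [ha, hb]
end Aux

/-- `(A, A*; L*, 𝓛*)` is a matched pair of mock-Lie algebras iff the cobracket `Δ`
satisfies the 1-cocycle condition. -/
theorem stmt12 {K A : Type*} [Field K] [CharZero K] [AddCommGroup A] [Module K A]
    [FiniteDimensional K A]
    (m : A →ₗ[K] A →ₗ[K] A) (hcA : ∀ x y : A, m x y = m y x)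
    (hjA : ∀ x y z : A, m x (m y z) + m y (m z x) + m z (m x y) = 0)
    (Δ : A →ₗ[K] A ⊗[K] A)
    (mlt : Module.Dual K A →ₗ[K] Module.Dual K A →ₗ[K] Module.Dual K A)
    (hmlt : ∀ (ξ η : Module.Dual K A) (x : A),
      mlt ξ η x = TensorProduct.dualDistrib K A A (ξ ⊗ₜ η) (Δ x))
    (hcD : ∀ ξ η : Module.Dual K A, mlt ξ η = mlt η ξ)
    (hjD : ∀ ξ η ν : Module.Dual K A,
      mlt ξ (mlt η ν) + mlt η (mlt ν ξ) + mlt ν (mlt ξ η) = 0)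
    (LL : Module.Dual K A →ₗ[K] Module.End K A)
    (hLL : ∀ (ξ : Module.Dual K A) (x : A) (η : Module.Dual K A),
      η (LL ξ x) = mlt ξ η x) :
    ((∀ x y : A, (m (m x y)).dualMap =
        -((m x).dualMap ∘ₗ (m y).dualMap) - (m y).dualMap ∘ₗ (m x).dualMap) ∧
     (∀ ξ η : Module.Dual K A, LL (mlt ξ η) = -(LL ξ * LL η) - LL η * LL ξ) ∧
     (∀ (x : A) (ξ η : Module.Dual K A),
        (m x).dualMap (mlt ξ η) + mlt ((m x).dualMap ξ) η + mlt ξ ((m x).dualMap η)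
          + (m (LL ξ x)).dualMap η + (m (LL η x)).dualMap ξ = 0) ∧
     (∀ (ξ : Module.Dual K A) (x y : A),
        LL ξ (m x y) + m (LL ξ x) y + m x (LL ξ y)
          + LL ((m x).dualMap ξ) y + LL ((m y).dualMap ξ) x = 0)) ↔
    (∀ x y : A, Δ (m x y) =
      -((LinearMap.rTensor A (m x) + LinearMap.lTensor A (m x)) (Δ y))
      - (LinearMap.rTensor A (m y) + LinearMap.lTensor A (m y)) (Δ x)) := by
  have hD : ∀ (x y : A) (ξ η : Module.Dual K A),
      TensorProduct.dualDistrib K A A (ξ ⊗ₜ η)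
        (Δ (m x y) + (LinearMap.rTensor A (m x) + LinearMap.lTensor A (m x)) (Δ y)
          + (LinearMap.rTensor A (m y) + LinearMap.lTensor A (m y)) (Δ x))
      = mlt ξ η (m x y) + mlt ((m x).dualMap ξ) η y + mlt ξ ((m x).dualMap η) y
          + mlt ((m y).dualMap ξ) η x + mlt ξ ((m y).dualMap η) x := by
    intro x y ξ η
    simp only [map_add, LinearMap.add_apply, pair_rT, pair_lT, ← hmlt]
    ring
  have lemA : ∀ (ξ η : Module.Dual K A) (x y : A),
      η (LL ξ (m x y) + m (LL ξ x) y + m x (LL ξ y)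
          + LL ((m x).dualMap ξ) y + LL ((m y).dualMap ξ) x)
      = mlt ξ η (m x y) + mlt ((m x).dualMap ξ) η y + mlt ξ ((m x).dualMap η) y
          + mlt ((m y).dualMap ξ) η x + mlt ξ ((m y).dualMap η) x := by
    intro ξ η x y
    have e1 : η (m (LL ξ x) y) = mlt ξ ((m y).dualMap η) x := by
      rw [hcA (LL ξ x) y]
      exact hLL ξ x ((m y).dualMap η)
    have e2 : η (m x (LL ξ y)) = mlt ξ ((m x).dualMap η) y := hLL ξ y ((m x).dualMap η)
    simp only [map_add]
    rw [hLL ξ (m x y) η, e1, e2, hLL ((m x).dualMap ξ) y η, hLL ((m y).dualMap ξ) x η]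
    ring
  have lemB : ∀ (x : A) (ξ η : Module.Dual K A) (y : A),
      ((m x).dualMap (mlt ξ η) + mlt ((m x).dualMap ξ) η + mlt ξ ((m x).dualMap η)
          + (m (LL ξ x)).dualMap η + (m (LL η x)).dualMap ξ) y
      = mlt ξ η (m x y) + mlt ((m x).dualMap ξ) η y + mlt ξ ((m x).dualMap η) y
          + mlt ((m y).dualMap ξ) η x + mlt ξ ((m y).dualMap η) x := by
    intro x ξ η y
    have e1 : η (m (LL ξ x) y) = mlt ξ ((m y).dualMap η) x := by
      rw [hcA (LL ξ x) y]; exact hLL ξ x ((m y).dualMap η)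
    have e2 : ξ (m (LL η x) y) = mlt ((m y).dualMap ξ) η x := by
      rw [hcA (LL η x) y]
      rw [show ξ (m y (LL η x)) = mlt η ((m y).dualMap ξ) x from hLL η x ((m y).dualMap ξ),
        hcD η ((m y).dualMap ξ)]
    simp only [LinearMap.add_apply, LinearMap.dualMap_apply]
    rw [e1, e2]
    ring
  constructor
  · rintro ⟨-, -, -, h4⟩ x y
    have h0 : Δ (m x y) + ((LinearMap.rTensor A (m x) + LinearMap.lTensor A (m x)) (Δ y)
        + (LinearMap.rTensor A (m y) + LinearMap.lTensor A (m y)) (Δ x)) = 0 := by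
      rw [← add_assoc]
      apply sep_tensor
      intro ξ η
      rw [hD x y ξ η, ← lemA ξ η x y, h4 ξ x y, map_zero]
    have h1 := eq_neg_of_add_eq_zero_left h0
    rw [h1, neg_add, sub_eq_add_neg]
  · intro hco
    have hDzero : ∀ x y : A, Δ (m x y)
        + (LinearMap.rTensor A (m x) + LinearMap.lTensor A (m x)) (Δ y)
        + (LinearMap.rTensor A (m y) + LinearMap.lTensor A (m y)) (Δ x) = 0 := by
      intro x y; rw [hco x y]; abel
    refine ⟨?_, ?_, ?_, ?_⟩
    · intro x y
      ext ξ z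
      have j : ξ (m x (m y z)) + ξ (m y (m z x)) + ξ (m z (m x y)) = 0 := by
        simpa [map_add] using congrArg ξ (hjA x y z)
      simp only [LinearMap.dualMap_apply, LinearMap.sub_apply, LinearMap.neg_apply,
        LinearMap.comp_apply, LinearMap.add_apply]
      rw [show m (m x y) z = m z (m x y) from hcA _ _]
      rw [show m z x = m x z from hcA _ _] at j
      linear_combination j
    · intro ξ η
      ext x
      rw [← sub_eq_zero, ← Module.forall_dual_apply_eq_zero_iff K]
      intro ν
      have j : mlt ξ (mlt η ν) x + mlt η (mlt ν ξ) x + mlt ν (mlt ξ η) x = 0 := by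
        simpa using congrArg (fun f => f x) (hjD ξ η ν)
      have e1 : ν (LL (mlt ξ η) x) = mlt (mlt ξ η) ν x := hLL _ _ _
      have e2 : ν (LL ξ (LL η x)) = mlt η (mlt ξ ν) x := by
        rw [hLL ξ (LL η x) ν]; exact hLL η x (mlt ξ ν)
      have e3 : ν (LL η (LL ξ x)) = mlt ξ (mlt η ν) x := by
        rw [hLL η (LL ξ x) ν]; exact hLL ξ x (mlt η ν)
      simp only [map_sub, LinearMap.sub_apply, LinearMap.neg_apply, map_neg,
        Module.End.mul_apply, LinearMap.add_apply]
      rw [e1, e2, e3, show mlt (mlt ξ η) ν = mlt ν (mlt ξ η) from hcD _ _]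
      rw [show mlt ξ ν = mlt ν ξ from hcD _ _] at e2 ⊢
      linear_combination j
    · intro x ξ η
      ext y
      rw [lemB x ξ η y, ← hD x y ξ η, hDzero x y, map_zero, LinearMap.zero_apply]
    · intro ξ x y
      rw [← Module.forall_dual_apply_eq_zero_iff K]
      intro η
      rw [lemA ξ η x y, ← hD x y ξ η, hDzero x y, map_zero]
end

section
/- Let (A,•) be a mock-Lie algebra, r = Σᵢ r₁ⁱ ⊗ r₂ⁱ ∈ A⊗A, and define Δ: A → A⊗A by Δ(x) = (L(x)⊗id - id⊗L(x))r. Then Δ satisfies Δ(x•y) = -(L(x)⊗id + id⊗L(x))Δ(y) - (L(y)⊗id + id⊗L(y))Δ(x) for all x,y ∈ A. -/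
open TensorProduct

/-- A coboundary `Δ(x) = (L(x)⊗id - id⊗L(x))r` always satisfies the 1-cocycle
compatibility condition of mock-Lie bialgebras. -/
theorem stmt13 {K A : Type*} [Field K] [CharZero K] [AddCommGroup A] [Module K A]
    (m : A →ₗ[K] A →ₗ[K] A) (hcomm : ∀ x y : A, m x y = m y x)
    (hjac : ∀ x y z : A, m x (m y z) + m y (m z x) + m z (m x y) = 0)
    (r : A ⊗[K] A)
    (Δ : A → A ⊗[K] A)
    (hΔ : ∀ x : A, Δ x = (LinearMap.rTensor A (m x) - LinearMap.lTensor A (m x)) r) :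
    ∀ x y : A, Δ (m x y) =
      -((LinearMap.rTensor A (m x) + LinearMap.lTensor A (m x)) (Δ y))
      - (LinearMap.rTensor A (m y) + LinearMap.lTensor A (m y)) (Δ x) := by
  intro x y
  rw [hΔ, hΔ, hΔ]
  clear hΔ
  induction r using TensorProduct.induction_on with
  | zero => simp
  | tmul a b =>
    simp only [LinearMap.sub_apply, LinearMap.add_apply, LinearMap.rTensor_tmul,
      LinearMap.lTensor_tmul, map_sub, map_add]
    have h1 : m (m x y) a = -(m x (m y a) + m y (m x a)) := by
      have h := hjac x y a
      rw [hcomm a x, hcomm a (m x y)] at h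
      exact eq_neg_of_add_eq_zero_right h
    have h2 : m (m x y) b = -(m x (m y b) + m y (m x b)) := by
      have h := hjac x y b
      rw [hcomm b x, hcomm b (m x y)] at h
      exact eq_neg_of_add_eq_zero_right h
    rw [h1, h2]
    simp only [neg_add, sub_tmul, neg_tmul, tmul_sub, tmul_neg, tmul_add, add_tmul]
    abel
  | add r₁ r₂ h₁ h₂ =>
    simp only [map_add] at *
    rw [h₁, h₂]
    abel
end

section
/- Let (A,•) be a mock-Lie algebra, r ∈ A⊗A, and Δ(x) = (L(x)⊗id - id⊗L(x))r. Suppose (L(x)⊗id - id⊗L(x))(r + τ(r)) = 0 for all x ∈ A, where τ is the flip. Then E_Δ(x) + Q(x)[[r,r]] = 0 for all x, where E_Δ(x) = (id+σ+σ²)((id⊗Δ)Δ(x)), [[r,r]] = r₁₂•r₁₃ + r₁₃•r₂₃ - r₁₂•r₂₃, and Q(x) = L(x)⊗id⊗id + id⊗L(x)⊗id + id⊗id⊗L(x). -/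
open TensorProduct

variable {K A : Type*} [Field K] [AddCommGroup A] [Module K A]

/-- Cyclic permutation `σ(x⊗y⊗z) = y⊗z⊗x` on `A ⊗ (A ⊗ A)`. -/
noncomputable def cyc (K A : Type*) [Field K] [AddCommGroup A] [Module K A] :
    A ⊗[K] (A ⊗[K] A) →ₗ[K] A ⊗[K] (A ⊗[K] A) :=
  (TensorProduct.assoc K A A A).toLinearMap ∘ₗ
    (TensorProduct.comm K A (A ⊗[K] A)).toLinearMap

/-- `(a⊗b)⊗(a'⊗b') ↦ (a•a')⊗(b⊗b')`, giving `r₁₂•r₁₃` when applied to `r ⊗ r`. -/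
noncomputable def c1213 (m : A →ₗ[K] A →ₗ[K] A) :
    (A ⊗[K] A) ⊗[K] (A ⊗[K] A) →ₗ[K] A ⊗[K] (A ⊗[K] A) :=
  (TensorProduct.map (TensorProduct.lift m) LinearMap.id) ∘ₗ
    (TensorProduct.tensorTensorTensorComm K A A A A).toLinearMap

/-- `(a⊗b)⊗(a'⊗b') ↦ a⊗(a'⊗(b•b'))`, giving `r₁₃•r₂₃` when applied to `r ⊗ r`. -/
noncomputable def c1323 (m : A →ₗ[K] A →ₗ[K] A) :
    (A ⊗[K] A) ⊗[K] (A ⊗[K] A) →ₗ[K] A ⊗[K] (A ⊗[K] A) :=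
  (LinearMap.lTensor A (LinearMap.lTensor A (TensorProduct.lift m))) ∘ₗ
    (TensorProduct.assoc K A A (A ⊗[K] A)).toLinearMap ∘ₗ
    (TensorProduct.tensorTensorTensorComm K A A A A).toLinearMap

/-- `(a⊗b)⊗(a'⊗b') ↦ a⊗((b•a')⊗b')`, giving `r₁₂•r₂₃` when applied to `r ⊗ r`. -/
noncomputable def c1223 (m : A →ₗ[K] A →ₗ[K] A) :
    (A ⊗[K] A) ⊗[K] (A ⊗[K] A) →ₗ[K] A ⊗[K] (A ⊗[K] A) :=
  (LinearMap.lTensor A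
      ((LinearMap.rTensor A (TensorProduct.lift m)) ∘ₗ
        (TensorProduct.assoc K A A A).symm.toLinearMap)) ∘ₗ
    (TensorProduct.assoc K A A (A ⊗[K] A)).toLinearMap

/-- `[[r,r]] = r₁₂•r₁₃ + r₁₃•r₂₃ - r₁₂•r₂₃ ∈ A ⊗ A ⊗ A`. -/
noncomputable def mockYB (m : A →ₗ[K] A →ₗ[K] A) (r : A ⊗[K] A) :
    A ⊗[K] (A ⊗[K] A) :=
  c1213 m (r ⊗ₜ[K] r) + c1323 m (r ⊗ₜ[K] r) - c1223 m (r ⊗ₜ[K] r)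

/-- The coboundary cobracket `Δ(x) = (L(x)⊗id - id⊗L(x))r` as a linear map. -/
noncomputable def cob (m : A →ₗ[K] A →ₗ[K] A) (r : A ⊗[K] A) : A →ₗ[K] A ⊗[K] A where
  toFun x := (LinearMap.rTensor A (m x) - LinearMap.lTensor A (m x)) r
  map_add' x y := by
    simp [map_add, LinearMap.rTensor_add, LinearMap.lTensor_add, LinearMap.sub_apply,
      LinearMap.add_apply]
    abel
  map_smul' c x := by
    simp [map_smul, LinearMap.rTensor_smul, LinearMap.lTensor_smul, LinearMap.sub_apply,
      LinearMap.smul_apply, smul_sub]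

/- ----------  auxiliary machinery ---------- -/

section Aux

variable (m : A →ₗ[K] A →ₗ[K] A)

lemma hexp_lemma (hcomm : ∀ x y : A, m x y = m y x)
    (hjac : ∀ x y z : A, m x (m y z) + m y (m z x) + m z (m x y) = 0)
    (y u v : A) : m y (m u v) = -(m u (m y v)) - m v (m y u) := by
  have h := hjac y u v
  rw [hcomm v y] at h
  have h1 : m y (m u v) + m u (m y v) = -(m v (m y u)) :=
    add_eq_zero_iff_eq_neg.mp h
  have h2 : m y (m u v) = -(m v (m y u)) - m u (m y v) := eq_sub_of_add_eq h1
  rw [h2]; abel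

/-- `B(u,v) = d ⊗ v ⊗ (u•c)` -/
noncomputable def Bmap1 (c d : A) : A →ₗ[K] A →ₗ[K] A ⊗[K] (A ⊗[K] A) :=
  LinearMap.mk₂ K (fun u v => d ⊗ₜ[K] (v ⊗ₜ[K] m u c))
    (fun u u' v => by simp [map_add, LinearMap.add_apply, tmul_add])
    (fun a u v => by simp [map_smul, LinearMap.smul_apply, tmul_smul])
    (fun u v v' => by simp [add_tmul, tmul_add])
    (fun a u v => by simp [smul_tmul, tmul_smul])

/-- `B(u,v) = c ⊗ (u•d) ⊗ v` -/
noncomputable def Bmap2 (c d : A) : A →ₗ[K] A →ₗ[K] A ⊗[K] (A ⊗[K] A) :=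
  LinearMap.mk₂ K (fun u v => c ⊗ₜ[K] (m u d ⊗ₜ[K] v))
    (fun u u' v => by simp [map_add, LinearMap.add_apply, add_tmul, tmul_add])
    (fun a u v => by simp [map_smul, LinearMap.smul_apply, smul_tmul, tmul_smul])
    (fun u v v' => by simp [add_tmul, tmul_add])
    (fun a u v => by simp [smul_tmul, tmul_smul])

/-- `B(u,v) = c ⊗ v ⊗ (u•d)` -/
noncomputable def Bmap3 (c d : A) : A →ₗ[K] A →ₗ[K] A ⊗[K] (A ⊗[K] A) :=
  LinearMap.mk₂ K (fun u v => c ⊗ₜ[K] (v ⊗ₜ[K] m u d))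
    (fun u u' v => by simp [map_add, LinearMap.add_apply, tmul_add])
    (fun a u v => by simp [map_smul, LinearMap.smul_apply, tmul_smul])
    (fun u v v' => by simp [add_tmul, tmul_add])
    (fun a u v => by simp [smul_tmul, tmul_smul])

/-- `B(u,v) = (u•d) ⊗ v ⊗ c` -/
noncomputable def Bmap4 (c d : A) : A →ₗ[K] A →ₗ[K] A ⊗[K] (A ⊗[K] A) :=
  LinearMap.mk₂ K (fun u v => m u d ⊗ₜ[K] (v ⊗ₜ[K] c))
    (fun u u' v => by simp [map_add, LinearMap.add_apply, add_tmul])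
    (fun a u v => by simp [map_smul, LinearMap.smul_apply, smul_tmul'])
    (fun u v v' => by simp [add_tmul, tmul_add])
    (fun a u v => by simp [smul_tmul, tmul_smul])

/-- `B(u,v) = v ⊗ d ⊗ (u•c)` -/
noncomputable def Bmap5 (c d : A) : A →ₗ[K] A →ₗ[K] A ⊗[K] (A ⊗[K] A) :=
  LinearMap.mk₂ K (fun u v => v ⊗ₜ[K] (d ⊗ₜ[K] m u c))
    (fun u u' v => by simp [map_add, LinearMap.add_apply, tmul_add])
    (fun a u v => by simp [map_smul, LinearMap.smul_apply, tmul_smul])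
    (fun u v v' => by simp [add_tmul])
    (fun a u v => by simp [smul_tmul'])

/-- `B(u,v) = (x•v) ⊗ d ⊗ u` -/
noncomputable def Bmap6 (x d : A) : A →ₗ[K] A →ₗ[K] A ⊗[K] (A ⊗[K] A) :=
  LinearMap.mk₂ K (fun u v => m x v ⊗ₜ[K] (d ⊗ₜ[K] u))
    (fun u u' v => by simp [tmul_add])
    (fun a u v => by simp [tmul_smul])
    (fun u v v' => by simp [map_add, add_tmul])
    (fun a u v => by simp [map_smul, smul_tmul'])

/-- `B(u,v) = v ⊗ d ⊗ (x•u)` -/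
noncomputable def Bmap7 (x d : A) : A →ₗ[K] A →ₗ[K] A ⊗[K] (A ⊗[K] A) :=
  LinearMap.mk₂ K (fun u v => v ⊗ₜ[K] (d ⊗ₜ[K] m x u))
    (fun u u' v => by simp [map_add, tmul_add])
    (fun a u v => by simp [map_smul, tmul_smul])
    (fun u v v' => by simp [add_tmul])
    (fun a u v => by simp [smul_tmul'])

/-- `B(u,v) = u ⊗ (x•d) ⊗ v` -/
noncomputable def Bmap8 (x d : A) : A →ₗ[K] A →ₗ[K] A ⊗[K] (A ⊗[K] A) :=
  LinearMap.mk₂ K (fun u v => u ⊗ₜ[K] (m x d ⊗ₜ[K] v))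
    (fun u u' v => by simp [add_tmul])
    (fun a u v => by simp [smul_tmul'])
    (fun u v v' => by simp [tmul_add])
    (fun a u v => by simp [tmul_smul])

/-- a single row of the invariance identity, summed over the finset it is zero -/
noncomputable def hsT (y : A) (B : A →ₗ[K] A →ₗ[K] A ⊗[K] (A ⊗[K] A)) (p : A × A) :
    A ⊗[K] (A ⊗[K] A) :=
  B (m y p.1) p.2 + B (m y p.2) p.1 - B p.1 (m y p.2) - B p.2 (m y p.1)

/-- the total row combination `Row p q` (summed variable `p`, spectator `q`). -/
noncomputable def RowF (x : A) (p q : A × A) : A ⊗[K] (A ⊗[K] A) :=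
  hsT m x (Bmap2 m q.1 q.2) p + hsT m x (Bmap4 m q.1 q.2) p
    + hsT m q.1 (Bmap8 m x q.2) p
    - hsT m x (Bmap1 m q.1 q.2) p - hsT m x (Bmap3 m q.1 q.2) p
    - hsT m x (Bmap5 m q.1 q.2) p - hsT m q.1 (Bmap6 m x q.2) p
    - hsT m q.1 (Bmap7 m x q.2) p

/-- the E-part of the expanded goal -/
noncomputable def PhiE (x : A) (p q : A × A) : A ⊗[K] (A ⊗[K] A) :=
  m x p.1 ⊗ₜ[K] (m p.2 q.1 ⊗ₜ[K] q.2)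
    + m p.2 q.1 ⊗ₜ[K] (q.2 ⊗ₜ[K] m x p.1)
    + q.2 ⊗ₜ[K] (m x p.1 ⊗ₜ[K] m p.2 q.1)
    - m x p.1 ⊗ₜ[K] (q.1 ⊗ₜ[K] m p.2 q.2)
    - q.1 ⊗ₜ[K] (m p.2 q.2 ⊗ₜ[K] m x p.1)
    - m p.2 q.2 ⊗ₜ[K] (m x p.1 ⊗ₜ[K] q.1)
    - p.1 ⊗ₜ[K] (m (m x p.2) q.1 ⊗ₜ[K] q.2)
    - m (m x p.2) q.1 ⊗ₜ[K] (q.2 ⊗ₜ[K] p.1)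
    - q.2 ⊗ₜ[K] (p.1 ⊗ₜ[K] m (m x p.2) q.1)
    + p.1 ⊗ₜ[K] (q.1 ⊗ₜ[K] m (m x p.2) q.2)
    + q.1 ⊗ₜ[K] (m (m x p.2) q.2 ⊗ₜ[K] p.1)
    + m (m x p.2) q.2 ⊗ₜ[K] (p.1 ⊗ₜ[K] q.1)

/-- the Q-part of the expanded goal -/
noncomputable def PhiQ (x : A) (p q : A × A) : A ⊗[K] (A ⊗[K] A) :=
  m x (m p.1 q.1) ⊗ₜ[K] (p.2 ⊗ₜ[K] q.2)
    + m x p.1 ⊗ₜ[K] (q.1 ⊗ₜ[K] m p.2 q.2)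
    - m x p.1 ⊗ₜ[K] (m p.2 q.1 ⊗ₜ[K] q.2)
    + m p.1 q.1 ⊗ₜ[K] (m x p.2 ⊗ₜ[K] q.2)
    + p.1 ⊗ₜ[K] (m x q.1 ⊗ₜ[K] m p.2 q.2)
    - p.1 ⊗ₜ[K] (m x (m p.2 q.1) ⊗ₜ[K] q.2)
    + m p.1 q.1 ⊗ₜ[K] (p.2 ⊗ₜ[K] m x q.2)
    + p.1 ⊗ₜ[K] (q.1 ⊗ₜ[K] m x (m p.2 q.2))
    - p.1 ⊗ₜ[K] (m p.2 q.1 ⊗ₜ[K] m x q.2)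

lemma key_identity (hcomm : ∀ x y : A, m x y = m y x)
    (hjac : ∀ x y z : A, m x (m y z) + m y (m z x) + m z (m x y) = 0)
    (x : A) (p q : A × A) :
    (PhiE m x p q + PhiQ m x p q) + (PhiE m x q p + PhiQ m x q p)
      = RowF m x p q + RowF m x q p := by
  have hx := hexp_lemma m hcomm hjac x
  simp only [RowF, hsT,
    show ∀ c d u v : A, Bmap4 m c d u v = m u d ⊗ₜ[K] (v ⊗ₜ[K] c) from fun _ _ _ _ => rfl,
    show ∀ c d u v : A, Bmap5 m c d u v = v ⊗ₜ[K] (d ⊗ₜ[K] m u c) from fun _ _ _ _ => rfl,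
    show ∀ c d u v : A, Bmap8 m c d u v = u ⊗ₜ[K] (m c d ⊗ₜ[K] v) from fun _ _ _ _ => rfl,
    show ∀ c d u v : A, Bmap1 m c d u v = d ⊗ₜ[K] (v ⊗ₜ[K] m u c) from fun _ _ _ _ => rfl,
    show ∀ c d u v : A, Bmap2 m c d u v = c ⊗ₜ[K] (m u d ⊗ₜ[K] v) from fun _ _ _ _ => rfl,
    show ∀ c d u v : A, Bmap3 m c d u v = c ⊗ₜ[K] (v ⊗ₜ[K] m u d) from fun _ _ _ _ => rfl,
    show ∀ c d u v : A, Bmap6 m c d u v = m c v ⊗ₜ[K] (d ⊗ₜ[K] u) from fun _ _ _ _ => rfl,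
    show ∀ c d u v : A, Bmap7 m c d u v = v ⊗ₜ[K] (d ⊗ₜ[K] m c u) from fun _ _ _ _ => rfl]
  simp only [RowF, hsT, Bmap1, Bmap2, Bmap3, Bmap4, Bmap5, Bmap6, Bmap7, Bmap8,
    LinearMap.mk₂_apply, PhiE, PhiQ]
  simp only [hx]
  simp only [show m q.1 p.1 = m p.1 q.1 from hcomm _ _,
    show m q.1 p.2 = m p.2 q.1 from hcomm _ _,
    show m q.2 p.1 = m p.1 q.2 from hcomm _ _,
    show m q.2 p.2 = m p.2 q.2 from hcomm _ _,
    show m (m x p.2) q.1 = m q.1 (m x p.2) from hcomm _ _,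
    show m (m x p.2) q.2 = m q.2 (m x p.2) from hcomm _ _,
    show m (m x q.2) p.1 = m p.1 (m x q.2) from hcomm _ _,
    show m (m x q.2) p.2 = m p.2 (m x q.2) from hcomm _ _,
    show m (m x p.1) q.1 = m q.1 (m x p.1) from hcomm _ _,
    show m (m x p.1) q.2 = m q.2 (m x p.1) from hcomm _ _,
    show m (m x q.1) p.1 = m p.1 (m x q.1) from hcomm _ _,
    show m (m x q.1) p.2 = m p.2 (m x q.1) from hcomm _ _]
  simp only [TensorProduct.tmul_add, TensorProduct.tmul_sub, TensorProduct.tmul_neg,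
    TensorProduct.add_tmul, TensorProduct.sub_tmul, TensorProduct.neg_tmul]
  set_option maxRecDepth 100000 in abel

end Aux

/-- If `(L(x)⊗id - id⊗L(x))(r + τ(r)) = 0` for all `x`, then
`E_Δ(x) + Q(x)[[r,r]] = 0`. -/
theorem stmt15 {K A : Type*} [Field K] [CharZero K] [AddCommGroup A] [Module K A]
    (m : A →ₗ[K] A →ₗ[K] A) (hcomm : ∀ x y : A, m x y = m y x)
    (hjac : ∀ x y z : A, m x (m y z) + m y (m z x) + m z (m x y) = 0)
    (r : A ⊗[K] A)
    (hsymm : ∀ x : A,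
      (LinearMap.rTensor A (m x) - LinearMap.lTensor A (m x))
        (r + TensorProduct.comm K A A r) = 0) :
    ∀ x : A,
      ((LinearMap.id : A ⊗[K] (A ⊗[K] A) →ₗ[K] A ⊗[K] (A ⊗[K] A)) + cyc K A +
          cyc K A ∘ₗ cyc K A)
          ((LinearMap.lTensor A (cob m r)) (cob m r x)) +
        (LinearMap.rTensor (A ⊗[K] A) (m x) +
          LinearMap.lTensor A (LinearMap.rTensor A (m x)) +
          LinearMap.lTensor A (LinearMap.lTensor A (m x))) (mockYB m r) = 0 := by
  intro x
  obtain ⟨s, hr⟩ := TensorProduct.exists_finset r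
  -- the cobracket evaluated on any element
  have hcob : ∀ y : A, cob m r y
      = ∑ p ∈ s, (m y p.1 ⊗ₜ[K] p.2 - p.1 ⊗ₜ[K] m y p.2) := by
    intro y
    show (LinearMap.rTensor A (m y) - LinearMap.lTensor A (m y)) r = _
    rw [hr, map_sum]
    refine Finset.sum_congr rfl fun p _ => ?_
    simp [LinearMap.sub_apply]
  -- invariance rows sum to zero
  have HS : ∀ (y : A) (B : A →ₗ[K] A →ₗ[K] A ⊗[K] (A ⊗[K] A)),
      ∑ w ∈ s, hsT m y B w = 0 := by
    intro y B
    have h := congrArg (TensorProduct.lift B) (hsymm y)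
    rw [map_zero] at h
    rw [hr] at h
    simp only [map_add, map_sum, LinearMap.sub_apply, LinearMap.rTensor_tmul,
      LinearMap.lTensor_tmul, TensorProduct.comm_tmul, map_sub,
      TensorProduct.lift.tmul] at h
    simp only [hsT]
    rw [← h]
    rw [← Finset.sum_add_distrib]
    refine Finset.sum_congr rfl fun p _ => ?_
    abel
  have HrowZero : ∀ t : A × A, ∑ w ∈ s, RowF m x w t = 0 := by
    intro t
    simp only [RowF, Finset.sum_add_distrib, Finset.sum_sub_distrib, HS]
    simp
  -- cyc on pure tensors
  have hcyc : ∀ a b c : A, cyc K A (a ⊗ₜ[K] (b ⊗ₜ[K] c)) = b ⊗ₜ[K] (c ⊗ₜ[K] a) := by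
    intro a b c
    simp [cyc]
  -- expansion of the E part
  have e1 : ((LinearMap.id : A ⊗[K] (A ⊗[K] A) →ₗ[K] A ⊗[K] (A ⊗[K] A)) + cyc K A +
      cyc K A ∘ₗ cyc K A) ((LinearMap.lTensor A (cob m r)) (cob m r x))
      = ∑ p ∈ s, ∑ q ∈ s, PhiE m x p q := by
    rw [hcob x, map_sum, map_sum]
    refine Finset.sum_congr rfl fun p _ => ?_
    rw [map_sub, LinearMap.lTensor_tmul, LinearMap.lTensor_tmul, hcob, hcob,
      tmul_sum, tmul_sum, ← Finset.sum_sub_distrib, map_sum]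
    refine Finset.sum_congr rfl fun q _ => ?_
    simp only [tmul_sub, map_sub, LinearMap.add_apply, LinearMap.comp_apply,
      LinearMap.id_apply, hcyc, PhiE]
    abel
  -- expansion of the Yang--Baxter element
  have hyb : mockYB m r = ∑ p ∈ s, ∑ q ∈ s,
      (m p.1 q.1 ⊗ₜ[K] (p.2 ⊗ₜ[K] q.2) + p.1 ⊗ₜ[K] (q.1 ⊗ₜ[K] m p.2 q.2)
        - p.1 ⊗ₜ[K] (m p.2 q.1 ⊗ₜ[K] q.2)) := by
    rw [mockYB, hr]
    rw [sum_tmul]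
    simp only [tmul_sum, map_sum]
    rw [← Finset.sum_add_distrib, ← Finset.sum_sub_distrib]
    refine Finset.sum_congr rfl fun p _ => ?_
    rw [← Finset.sum_add_distrib, ← Finset.sum_sub_distrib]
    refine Finset.sum_congr rfl fun q _ => ?_
    simp [c1213, c1323, c1223, tensorTensorTensorComm_tmul, assoc_tmul,
      assoc_symm_tmul, lift.tmul]
  -- expansion of the Q part
  have e2 : (LinearMap.rTensor (A ⊗[K] A) (m x) +
      LinearMap.lTensor A (LinearMap.rTensor A (m x)) +
      LinearMap.lTensor A (LinearMap.lTensor A (m x))) (mockYB m r)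
      = ∑ p ∈ s, ∑ q ∈ s, PhiQ m x p q := by
    rw [hyb, map_sum]
    refine Finset.sum_congr rfl fun p _ => ?_
    rw [map_sum]
    refine Finset.sum_congr rfl fun q _ => ?_
    simp only [map_add, map_sub, LinearMap.add_apply, LinearMap.rTensor_tmul,
      LinearMap.lTensor_tmul, PhiQ]
    abel
  rw [e1, e2]
  have hgoal : ∑ p ∈ s, ∑ q ∈ s, PhiE m x p q + ∑ p ∈ s, ∑ q ∈ s, PhiQ m x p q
      = ∑ p ∈ s, ∑ q ∈ s, (PhiE m x p q + PhiQ m x p q) := by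
    rw [← Finset.sum_add_distrib]
    exact Finset.sum_congr rfl fun p _ => (Finset.sum_add_distrib).symm
  rw [hgoal]
  set Z := ∑ p ∈ s, ∑ q ∈ s, (PhiE m x p q + PhiQ m x p q) with hZ
  have hdouble : Z + Z = 0 := by
    have step1 : Z + Z = ∑ p ∈ s, ∑ q ∈ s,
        ((PhiE m x p q + PhiQ m x p q) + (PhiE m x q p + PhiQ m x q p)) := by
      rw [hZ]
      nth_rewrite 2 [Finset.sum_comm]
      rw [← Finset.sum_add_distrib]
      exact Finset.sum_congr rfl fun p _ => (Finset.sum_add_distrib).symm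
    have step2 : Z + Z = ∑ p ∈ s, ∑ q ∈ s, (RowF m x p q + RowF m x q p) := by
      rw [step1]
      exact Finset.sum_congr rfl fun p _ => Finset.sum_congr rfl fun q _ =>
        key_identity m hcomm hjac x p q
    rw [step2]
    have split : ∑ p ∈ s, ∑ q ∈ s, (RowF m x p q + RowF m x q p)
        = (∑ p ∈ s, ∑ q ∈ s, RowF m x p q) + ∑ p ∈ s, ∑ q ∈ s, RowF m x q p := by
      rw [← Finset.sum_add_distrib]
      exact Finset.sum_congr rfl fun p _ => Finset.sum_add_distrib
    rw [split]
    have z1 : ∑ p ∈ s, ∑ q ∈ s, RowF m x p q = 0 := by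
      rw [Finset.sum_comm]
      exact Finset.sum_eq_zero fun q _ => HrowZero q
    have z2 : ∑ p ∈ s, ∑ q ∈ s, RowF m x q p = 0 :=
      Finset.sum_eq_zero fun p _ => HrowZero p
    rw [z1, z2, add_zero]
  have h2 : (2 : K) • Z = 0 := by
    rw [two_smul]; exact hdouble
  rcases smul_eq_zero.mp h2 with h | h
  · exact absurd h two_ne_zero
  · exact h
end

section
/- Let (A,•) be a mock-Lie algebra and r ∈ A⊗A skew-symmetric (τ(r) = -r), viewed as a linear map r: A* → A via ⟨ξ, r(η)⟩ = ⟨ξ⊗η, r⟩. Then r satisfies the mock-Lie Yang–Baxter equation [[r,r]] = r₁₂•r₁₃ + r₁₃•r₂₃ - r₁₂•r₂₃ = 0 if and only if r(ξ)•r(η) = r(L*(r(ξ))η + L*(r(η))ξ) for all ξ,η ∈ A*. -/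
open TensorProduct

variable {K A : Type*} [Field K] [AddCommGroup A] [Module K A]

/-- Right contraction `a ⊗ b ↦ φ(b) • a`. -/
noncomputable def cR (φ : Module.Dual K A) : A ⊗[K] A →ₗ[K] A :=
  (TensorProduct.rid K A).toLinearMap ∘ₗ LinearMap.lTensor A φ

/-- Left contraction `a ⊗ b ↦ φ(a) • b`. -/
noncomputable def cL (φ : Module.Dual K A) : A ⊗[K] A →ₗ[K] A :=
  (TensorProduct.lid K A).toLinearMap ∘ₗ LinearMap.rTensor A φ

lemma cR_tmul (φ : Module.Dual K A) (a b : A) : cR φ (a ⊗ₜ[K] b) = φ b • a := by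
  simp [cR]

lemma cL_tmul (φ : Module.Dual K A) (a b : A) : cL φ (a ⊗ₜ[K] b) = φ a • b := by
  simp [cL]

lemma dual_cR (ξ φ : Module.Dual K A) (s : A ⊗[K] A) :
    ξ (cR φ s) = TensorProduct.dualDistrib K A A (ξ ⊗ₜ φ) s := by
  induction s using TensorProduct.induction_on with
  | zero => simp
  | tmul a b => simp [cR_tmul, smul_eq_mul, mul_comm]
  | add s t hs ht => simp [map_add, hs, ht]

lemma cL_eq_cR_comm (φ : Module.Dual K A) (s : A ⊗[K] A) :
    cL φ s = cR φ (TensorProduct.comm K A A s) := by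
  induction s using TensorProduct.induction_on with
  | zero => simp
  | tmul a b => simp [cL_tmul, cR_tmul]
  | add s t hs ht => simp [map_add, hs, ht]

lemma dd_comm (φ ζ : Module.Dual K A) (s : A ⊗[K] A) :
    TensorProduct.dualDistrib K A A (φ ⊗ₜ ζ) (TensorProduct.comm K A A s) =
      TensorProduct.dualDistrib K A A (ζ ⊗ₜ φ) s := by
  induction s using TensorProduct.induction_on with
  | zero => simp
  | tmul a b => simp [mul_comm]
  | add s t hs ht => simp [map_add, hs, ht]

/-- Evaluation of `A ⊗ (A ⊗ A)` against a triple of functionals. -/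
noncomputable def E3 (ξ η ζ : Module.Dual K A) : A ⊗[K] (A ⊗[K] A) →ₗ[K] K :=
  TensorProduct.dualDistrib K A (A ⊗[K] A)
    (ξ ⊗ₜ (TensorProduct.dualDistrib K A A (η ⊗ₜ ζ)))

lemma E3_tmul (ξ η ζ : Module.Dual K A) (a b c : A) :
    E3 ξ η ζ (a ⊗ₜ (b ⊗ₜ c)) = ξ a * (η b * ζ c) := by
  simp [E3]

lemma eq_zero_of_forall_E3 [FiniteDimensional K A] (T : A ⊗[K] (A ⊗[K] A))
    (h : ∀ ξ η ζ : Module.Dual K A, E3 ξ η ζ T = 0) : T = 0 := by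
  rw [← Module.forall_dual_apply_eq_zero_iff K]
  intro f
  obtain ⟨t, rfl⟩ : ∃ t, TensorProduct.dualDistrib K A (A ⊗[K] A) t = f :=
    ⟨(TensorProduct.dualDistribEquiv K A (A ⊗[K] A)).symm f,
      (TensorProduct.dualDistribEquiv K A (A ⊗[K] A)).apply_symm_apply f⟩
  induction t using TensorProduct.induction_on with
  | zero => simp
  | tmul ξ g =>
    obtain ⟨u, rfl⟩ : ∃ u, TensorProduct.dualDistrib K A A u = g :=
      ⟨(TensorProduct.dualDistribEquiv K A A).symm g,
        (TensorProduct.dualDistribEquiv K A A).apply_symm_apply g⟩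
    induction u using TensorProduct.induction_on with
    | zero => simp
    | tmul η ζ => exact h ξ η ζ
    | add u v hu hv =>
      rw [map_add, tmul_add, map_add, LinearMap.add_apply, hu, hv, add_zero]
  | add s t hs ht =>
    rw [map_add, LinearMap.add_apply, hs, ht, add_zero]

lemma E3_c1213 (m : A →ₗ[K] A →ₗ[K] A) (ξ η ζ : Module.Dual K A)
    (s t : A ⊗[K] A) :
    E3 ξ η ζ (c1213 m (s ⊗ₜ t)) = ξ (m (cR η s) (cR ζ t)) := by
  induction s using TensorProduct.induction_on with
  | zero => simp
  | tmul a b =>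
    induction t using TensorProduct.induction_on with
    | zero => simp
    | tmul a' b' =>
      simp [c1213, E3, cR_tmul, smul_eq_mul]
      ring
    | add t1 t2 h1 h2 =>
      simp only [tmul_add, map_add, LinearMap.add_apply, h1, h2]
  | add s1 s2 h1 h2 =>
    simp only [add_tmul, map_add, LinearMap.add_apply, h1, h2]

lemma E3_c1323 (m : A →ₗ[K] A →ₗ[K] A) (ξ η ζ : Module.Dual K A)
    (s t : A ⊗[K] A) :
    E3 ξ η ζ (c1323 m (s ⊗ₜ t)) = ζ (m (cL ξ s) (cL η t)) := by
  induction s using TensorProduct.induction_on with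
  | zero => simp
  | tmul a b =>
    induction t using TensorProduct.induction_on with
    | zero => simp
    | tmul a' b' =>
      simp [c1323, E3, cL_tmul, smul_eq_mul]
      ring
    | add t1 t2 h1 h2 =>
      simp only [tmul_add, map_add, LinearMap.add_apply, h1, h2]
  | add s1 s2 h1 h2 =>
    simp only [add_tmul, map_add, LinearMap.add_apply, h1, h2]

lemma E3_c1223 (m : A →ₗ[K] A →ₗ[K] A) (ξ η ζ : Module.Dual K A)
    (s t : A ⊗[K] A) :
    E3 ξ η ζ (c1223 m (s ⊗ₜ t)) = η (m (cL ξ s) (cR ζ t)) := by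
  induction s using TensorProduct.induction_on with
  | zero => simp
  | tmul a b =>
    induction t using TensorProduct.induction_on with
    | zero => simp
    | tmul a' b' =>
      simp [c1223, E3, cL_tmul, cR_tmul, smul_eq_mul]
      ring
    | add t1 t2 h1 h2 =>
      simp only [tmul_add, map_add, LinearMap.add_apply, h1, h2]
  | add s1 s2 h1 h2 =>
    simp only [add_tmul, map_add, LinearMap.add_apply, h1, h2]

/-- A skew-symmetric `r` solves the mock-Lie Yang–Baxter equation iff the induced
map `r : A* → A` satisfies the `O`-operator identity w.r.t. the coadjoint action. -/
theorem stmt16 {K A : Type*} [Field K] [CharZero K] [AddCommGroup A] [Module K A]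
    [FiniteDimensional K A]
    (m : A →ₗ[K] A →ₗ[K] A) (hcomm : ∀ x y : A, m x y = m y x)
    (hjac : ∀ x y z : A, m x (m y z) + m y (m z x) + m z (m x y) = 0)
    (r : A ⊗[K] A) (hskew : TensorProduct.comm K A A r = -r)
    (rmap : Module.Dual K A →ₗ[K] A)
    (hr : ∀ ξ η : Module.Dual K A,
      ξ (rmap η) = TensorProduct.dualDistrib K A A (ξ ⊗ₜ η) r) :
    mockYB m r = 0 ↔
    (∀ ξ η : Module.Dual K A,
      m (rmap ξ) (rmap η) =
        rmap ((m (rmap ξ)).dualMap η + (m (rmap η)).dualMap ξ)) := by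
  have hsep : ∀ x y : A, (∀ f : Module.Dual K A, f x = f y) → x = y := by
    intro x y h
    have h0 : ∀ f : Module.Dual K A, f (x - y) = 0 := by
      intro f; rw [map_sub, h f, sub_self]
    exact sub_eq_zero.mp ((Module.forall_dual_apply_eq_zero_iff K (x - y)).mp h0)
  have hcR : ∀ φ : Module.Dual K A, cR φ r = rmap φ := by
    intro φ
    refine hsep _ _ (fun f => ?_)
    rw [dual_cR, hr]
  have hcL : ∀ φ : Module.Dual K A, cL φ r = -rmap φ := by
    intro φ
    rw [cL_eq_cR_comm, hskew, map_neg, hcR]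
  have hpair : ∀ φ ζ : Module.Dual K A, ζ (rmap φ) = - φ (rmap ζ) := by
    intro φ ζ
    rw [hr ζ φ, hr φ ζ, ← dd_comm ζ φ r, hskew, map_neg, neg_neg]
  have hE : ∀ ξ η ζ : Module.Dual K A,
      E3 ξ η ζ (mockYB m r) =
        ξ (m (rmap η) (rmap ζ)) + ζ (m (rmap ξ) (rmap η)) +
          η (m (rmap ξ) (rmap ζ)) := by
    intro ξ η ζ
    simp only [mockYB, map_add, map_sub, E3_c1213, E3_c1323, E3_c1223, hcR, hcL,
      map_neg, LinearMap.neg_apply, neg_neg]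
    ring
  have hRHS : ∀ ξ η ζ : Module.Dual K A,
      ζ (rmap ((m (rmap ξ)).dualMap η + (m (rmap η)).dualMap ξ)) =
        - η (m (rmap ξ) (rmap ζ)) - ξ (m (rmap η) (rmap ζ)) := by
    intro ξ η ζ
    rw [map_add, map_add, hpair ((m (rmap ξ)).dualMap η) ζ,
      hpair ((m (rmap η)).dualMap ξ) ζ]
    simp only [LinearMap.dualMap_apply]
    ring
  constructor
  · intro h0 ξ η
    refine hsep _ _ (fun ζ => ?_)
    have h1 := hE ξ η ζ
    rw [h0, map_zero] at h1
    rw [hRHS ξ η ζ]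
    linear_combination -h1
  · intro hO
    refine eq_zero_of_forall_E3 _ (fun ξ η ζ => ?_)
    rw [hE ξ η ζ]
    have h1 := congrArg ζ (hO ξ η)
    rw [hRHS ξ η ζ] at h1
    linear_combination h1
end

section
/- Let (A,•) be a mock-Lie algebra equipped with a symplectic form ω (skew-symmetric, nondegenerate, with ω(x•y,z) + ω(y•z,x) + ω(z•x,y) = 0). Then the product · defined by ω(x·y, z) = ω(y, x•z) for all x,y,z makes A a mock-pre-Lie algebra compatible with •, i.e. x·y + y·x = x•y. -/
/-- A symplectic form on a mock-Lie algebra induces a compatible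
mock-pre-Lie structure via `ω(x·y,z) = ω(y, x•z)`. -/
theorem stmt19 {K A : Type*} [Field K] [CharZero K] [AddCommGroup A] [Module K A]
    [FiniteDimensional K A]
    (m : A →ₗ[K] A →ₗ[K] A) (hcomm : ∀ x y : A, m x y = m y x)
    (hjac : ∀ x y z : A, m x (m y z) + m y (m z x) + m z (m x y) = 0)
    (ω : A →ₗ[K] A →ₗ[K] K) (hskew : ∀ x y : A, ω x y = -ω y x)
    (hnd : ω.Nondegenerate)
    (hsymp : ∀ x y z : A, ω (m x y) z + ω (m y z) x + ω (m z x) y = 0)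
    (c : A → A → A) (hc : ∀ x y z : A, ω (c x y) z = ω y (m x z)) :
    (∀ x y z : A, c (c x y) z + c x (c y z) = -(c (c y x) z + c y (c x z))) ∧
    (∀ x y : A, c x y + c y x = m x y) := by
  -- derived identity: ω (m x y) u = ω y (m x u) + ω x (m y u)
  have F : ∀ x y u : A, ω (m x y) u = ω y (m x u) + ω x (m y u) := by
    intro x y u
    have h1 := hsymp x y u
    have h2 := hskew (m y u) x
    have h3 := hskew (m u x) y
    rw [hcomm u x] at h3 h1
    linear_combination h1 - h2 - h3
  have compat : ∀ x y : A, c x y + c y x = m x y := by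
    intro x y
    have key : ∀ u : A, ω (c x y + c y x - m x y) u = 0 := by
      intro u
      have e : ω (c x y + c y x - m x y) u
          = ω (c x y) u + ω (c y x) u - ω (m x y) u := by
        simp [map_sub, map_add]
      rw [e, hc x y u, hc y x u, F x y u]
      ring
    have := hnd.1 _ key
    rwa [sub_eq_zero] at this
  refine ⟨?_, compat⟩
  intro x y z
  rw [eq_neg_iff_add_eq_zero]
  apply hnd.1
  intro w
  have e : ω (c (c x y) z + c x (c y z) + (c (c y x) z + c y (c x z))) w
      = ω (c (c x y) z) w + ω (c x (c y z)) w + ω (c (c y x) z) w + ω (c y (c x z)) w := by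
    simp [map_add]; ring
  rw [e, hc (c x y) z w, hc x (c y z) w, hc y z (m x w),
      hc (c y x) z w, hc y (c x z) w, hc x z (m y w)]
  have e2 : ω z (m (c x y) w) + ω z (m y (m x w)) + ω z (m (c y x) w) + ω z (m x (m y w))
      = ω z (m (c x y + c y x) w + (m y (m x w) + m x (m y w))) := by
    simp [map_add, LinearMap.add_apply]; ring
  rw [e2, compat x y]
  have hj := hjac x y w
  rw [hcomm w x, hcomm w (m x y)] at hj
  have : m (m x y) w + (m y (m x w) + m x (m y w)) = 0 := by rw [← hj]; abel
  rw [this, map_zero]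
end
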